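/- arXiv:1911.09630 — 4 statements merged into one kernel-verified Lean document; each statement's English description precedes it below -/
import Mathlib

section
/- If X is a Poisson random variable with mean m and k is a natural number, then the conditional distribution of X given X ≥ k is stochastically dominated by k + Po(m); that is, for every n, P(X ≥ n | X ≥ k) ≤ P(k + Y ≥ n) where Y ~ Po(m). -/
open scoped Classical

/-- The Poisson probability mass function with mean `m`. -/
noncomputable def ppmf (m : ℝ) (n : ℕ) : ℝ := Real.exp (-m) * m ^ n / n.factorial

/-- The tail `P(X ≥ k)` for `X ~ Poisson(m)`. -/
noncomputable def ptail (m : ℝ) (k : ℕ) : ℝ := ∑' n : ℕ, if k ≤ n then ppmf m n else 0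

lemma ppmf_pos (m : ℝ) (hm : 0 < m) (n : ℕ) : 0 < ppmf m n := by
  unfold ppmf
  positivity

lemma ppmf_summable (m : ℝ) : Summable (ppmf m) := by
  have h := (Real.summable_pow_div_factorial m).mul_left (Real.exp (-m))
  refine h.congr fun n => ?_
  unfold ppmf
  ring

lemma ptail_summand_summable (m : ℝ) (k : ℕ) :
    Summable (fun n : ℕ => if k ≤ n then ppmf m n else 0) := by
  refine (ppmf_summable m).summable_of_eq_zero_or_self fun n => ?_
  by_cases h : k ≤ n <;> simp [h]

lemma ptail_pos (m : ℝ) (hm : 0 < m) (k : ℕ) : 0 < ptail m k := by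
  have h1 : ppmf m k ≤ ptail m k := by
    have := Summable.le_tsum (ptail_summand_summable m k) k
      (fun j _ => by by_cases h : k ≤ j <;> simp [h, (ppmf_pos m hm j).le])
    simpa [ptail] using this
  exact lt_of_lt_of_le (ppmf_pos m hm k) h1

lemma ptail_zero (m : ℝ) : ptail m 0 = 1 := by
  unfold ptail
  have : (fun n : ℕ => if 0 ≤ n then ppmf m n else 0) = ppmf m := by
    funext n; simp
  rw [this]
  unfold ppmf
  have h1 : ∑' n : ℕ, Real.exp (-m) * m ^ n / n.factorial
      = Real.exp (-m) * ∑' n : ℕ, m ^ n / n.factorial := by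
    rw [← tsum_mul_left]
    exact tsum_congr fun n => by ring
  rw [h1]
  have h2 : (∑' n : ℕ, m ^ n / n.factorial) = Real.exp m := by
    rw [Real.exp_eq_exp_ℝ, NormedSpace.exp_eq_tsum_div]
  rw [h2, ← Real.exp_add]
  simp

lemma ptail_succ (m : ℝ) (k : ℕ) : ptail m k = ppmf m k + ptail m (k + 1) := by
  unfold ptail
  have heq : (fun n : ℕ => if k ≤ n then ppmf m n else 0)
      = fun n : ℕ => (if n = k then ppmf m n else 0) + (if k + 1 ≤ n then ppmf m n else 0) := by
    funext n
    by_cases h1 : k + 1 ≤ n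
    · rw [if_pos (by omega), if_neg (by omega), if_pos h1]; ring
    · by_cases h2 : n = k
      · subst h2; rw [if_pos le_rfl, if_pos rfl, if_neg h1]; ring
      · rw [if_neg (by omega), if_neg h2, if_neg h1]; ring
  rw [heq, Summable.tsum_add ?_ (ptail_summand_summable m (k+1))]
  · congr 1
    have := tsum_ite_eq k (fun _ => ppmf m k)
    rw [← this]
    exact tsum_congr fun n => by by_cases h : n = k <;> simp [h]
  · refine (ppmf_summable m).summable_of_eq_zero_or_self fun n => ?_
    by_cases h : n = k <;> simp [h]

/-- `(n+1) p(n+1) = m p(n)` -/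
lemma ppmf_rec (m : ℝ) (n : ℕ) : ((n : ℝ) + 1) * ppmf m (n + 1) = m * ppmf m n := by
  unfold ppmf
  rw [Nat.factorial_succ]
  push_cast
  have h : ((n : ℝ) + 1) ≠ 0 := by positivity
  have h2 : (n.factorial : ℝ) ≠ 0 := Nat.cast_ne_zero.2 n.factorial_ne_zero
  field_simp
  ring

lemma ppmf_logconcave (m : ℝ) (hm : 0 < m) {n j : ℕ} (h : n ≤ j) :
    ppmf m n * ppmf m (j + 1) ≤ ppmf m (n + 1) * ppmf m j := by
  have hn := ppmf_rec m n
  have hj := ppmf_rec m j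
  have pn := ppmf_pos m hm n
  have pj := ppmf_pos m hm j
  have h1 : ppmf m (j + 1) = m * ppmf m j / ((j : ℝ) + 1) := by
    field_simp at hj ⊢; linarith
  have h2 : ppmf m (n + 1) = m * ppmf m n / ((n : ℝ) + 1) := by
    field_simp at hn ⊢; linarith
  rw [h1, h2]
  rw [mul_div_assoc', div_mul_eq_mul_div, div_le_div_iff₀ (by positivity) (by positivity)]
  have hc : (n : ℝ) + 1 ≤ (j : ℝ) + 1 := by exact_mod_cast Nat.succ_le_succ h
  nlinarith [mul_pos (mul_pos hm pn) pj]

/-- Increasing hazard rate: `p n * T (n+1) ≤ p (n+1) * T n`. -/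
lemma hazard (m : ℝ) (hm : 0 < m) (n : ℕ) :
    ppmf m n * ptail m (n + 1) ≤ ppmf m (n + 1) * ptail m n := by
  have hL : ppmf m n * ptail m (n + 1)
      = ∑' j : ℕ, (if n ≤ j then ppmf m n * ppmf m (j + 1) else 0) := by
    unfold ptail
    rw [← tsum_mul_left]
    have hs : Summable (fun j : ℕ => if n + 1 ≤ j then ppmf m n * ppmf m j else 0) := by
      refine ((ppmf_summable m).mul_left (ppmf m n)).summable_of_eq_zero_or_self fun j => ?_
      by_cases h : n + 1 ≤ j <;> simp [h]
    have e1 : (∑' j : ℕ, ppmf m n * (if n + 1 ≤ j then ppmf m j else 0))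
        = ∑' j : ℕ, (if n + 1 ≤ j then ppmf m n * ppmf m j else 0) :=
      tsum_congr fun j => by by_cases h : n + 1 ≤ j <;> simp [h]
    rw [e1, Summable.tsum_eq_zero_add hs]
    simp only [show ¬ (n + 1 ≤ 0) by omega, if_false, zero_add]
    exact tsum_congr fun j => by
      by_cases h : n ≤ j <;> simp [h, Nat.succ_le_succ_iff]
  have hR : ppmf m (n + 1) * ptail m n
      = ∑' j : ℕ, (if n ≤ j then ppmf m (n + 1) * ppmf m j else 0) := by
    unfold ptail
    rw [← tsum_mul_left]
    exact tsum_congr fun j => by by_cases h : n ≤ j <;> simp [h]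
  rw [hL, hR]
  have hsL : Summable (fun j : ℕ => if n ≤ j then ppmf m n * ppmf m (j + 1) else 0) := by
    have : Summable (fun j : ℕ => ppmf m n * ppmf m (j + 1)) :=
      (((ppmf_summable m).mul_left (ppmf m n)).comp_injective (add_left_injective 1))
    refine this.summable_of_eq_zero_or_self fun j => ?_
    by_cases h : n ≤ j <;> simp [h]
  have hsR : Summable (fun j : ℕ => if n ≤ j then ppmf m (n + 1) * ppmf m j else 0) := by
    refine ((ppmf_summable m).mul_left (ppmf m (n + 1))).summable_of_eq_zero_or_self fun j => ?_
    by_cases h : n ≤ j <;> simp [h]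
  refine Summable.tsum_le_tsum (fun j => ?_) hsL hsR
  by_cases h : n ≤ j
  · simpa [h] using ppmf_logconcave m hm h
  · simp [h]

/-- Log-concavity of the tail. -/
lemma ptail_logconcave (m : ℝ) (hm : 0 < m) (n : ℕ) :
    ptail m (n + 2) * ptail m n ≤ ptail m (n + 1) * ptail m (n + 1) := by
  have h1 := ptail_succ m n
  have h2 := ptail_succ m (n + 1)
  have hz := hazard m hm n
  have t1 := (ptail_pos m hm n).le
  have t2 := (ptail_pos m hm (n + 1)).le
  nlinarith [ppmf_pos m hm n, ppmf_pos m hm (n + 1)]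

lemma ratio_antitone (m : ℝ) (hm : 0 < m) :
    Antitone (fun n => ptail m (n + 1) / ptail m n) := by
  refine antitone_nat_of_succ_le fun n => ?_
  rw [div_le_div_iff₀ (ptail_pos m hm (n + 1)) (ptail_pos m hm n)]
  have := ptail_logconcave m hm n
  nlinarith

/-- New better than used: `T (k + d) ≤ T k * T d`. -/
lemma ptail_nbu (m : ℝ) (hm : 0 < m) (k d : ℕ) :
    ptail m (k + d) ≤ ptail m k * ptail m d := by
  induction d with
  | zero => simp [ptail_zero]
  | succ d ih =>
    have hkd := ptail_pos m hm (k + d)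
    have hd := ptail_pos m hm d
    have hk := ptail_pos m hm k
    have hstep : ptail m (k + d + 1) = ptail m (k + d) * (ptail m (k + d + 1) / ptail m (k + d)) :=
      (mul_div_cancel₀ _ hkd.ne').symm
    have hr : ptail m (k + d + 1) / ptail m (k + d) ≤ ptail m (d + 1) / ptail m d :=
      ratio_antitone m hm (Nat.le_add_left d k)
    calc ptail m (k + (d + 1)) = ptail m (k + d) * (ptail m (k + d + 1) / ptail m (k + d)) := by
          rw [← hstep]; ring_nf
      _ ≤ (ptail m k * ptail m d) * (ptail m (d + 1) / ptail m d) := by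
          exact mul_le_mul ih hr (div_nonneg (ptail_pos m hm _).le hkd.le) (mul_nonneg hk.le hd.le)
      _ = ptail m k * ptail m (d + 1) := by field_simp

/-- If `X ~ Poisson(m)` then `X` conditioned on `X ≥ k` is stochastically dominated by
`k + Poisson(m)`: for every `n`, `P(X ≥ n | X ≥ k) ≤ P(k + Y ≥ n)` with `Y ~ Poisson(m)`. -/
theorem stmt0 (m : ℝ) (hm : 0 < m) (k : ℕ) (hk : 0 < ptail m k) :
    ∀ n : ℕ, ptail m (max n k) / ptail m k ≤ ptail m (n - k) := by
  intro n
  by_cases h : n ≤ k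
  · rw [max_eq_right h, Nat.sub_eq_zero_of_le h, ptail_zero, div_self hk.ne']
  · push_neg at h
    rw [max_eq_left h.le]
    rw [div_le_iff₀ hk]
    have := ptail_nbu m hm k (n - k)
    calc ptail m n = ptail m (k + (n - k)) := by rw [Nat.add_sub_cancel' h.le]
      _ ≤ ptail m k * ptail m (n - k) := this
      _ = ptail m (n - k) * ptail m k := by ring
end

section
/- Let X be a nonnegative integer-valued random variable stochastically dominated by Poisson(m), and conditionally on X let Y ~ Binomial(X, p) for some p ∈ (0,1]. Then P(Y ≥ 1) · E[X | Y ≥ 1] ≤ pm(m+1). -/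
open scoped Classical

lemma real_exp_tsum (m : ℝ) : Real.exp m = ∑' n : ℕ, m ^ n / n.factorial := by
  rw [Real.exp_eq_exp_ℝ, NormedSpace.exp_eq_tsum_div]

lemma ppmf_nonneg {m : ℝ} (hm : 0 ≤ m) (n : ℕ) : 0 ≤ ppmf m n := by
  unfold ppmf
  positivity

/-- summability of `n ↦ n * m^n / n!` -/
lemma summable_mul1 (m : ℝ) : Summable (fun n : ℕ => (n : ℝ) * m ^ n / n.factorial) := by
  rw [← summable_nat_add_iff 1]
  have : (fun n : ℕ => ((n + 1 : ℕ) : ℝ) * m ^ (n + 1) / (n + 1).factorial)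
      = fun n : ℕ => m * (m ^ n / n.factorial) := by
    funext n
    have h : ((n + 1).factorial : ℝ) = (n + 1) * n.factorial := by
      rw [Nat.factorial_succ]; push_cast; ring
    rw [h]
    have hn : ((n : ℝ) + 1) ≠ 0 := by positivity
    push_cast
    field_simp
    ring
  rw [this]
  exact (Real.summable_pow_div_factorial m).mul_left m

/-- summability of `n ↦ n(n-1) * m^n / n!` -/
lemma summable_mul2 (m : ℝ) :
    Summable (fun n : ℕ => (n : ℝ) * ((n : ℝ) - 1) * m ^ n / n.factorial) := by
  rw [← summable_nat_add_iff 2]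
  have : (fun n : ℕ => ((n + 2 : ℕ) : ℝ) * (((n + 2 : ℕ) : ℝ) - 1) * m ^ (n + 2) / (n + 2).factorial)
      = fun n : ℕ => m ^ 2 * (m ^ n / n.factorial) := by
    funext n
    have h : ((n + 2).factorial : ℝ) = ((n : ℝ) + 2) * ((n : ℝ) + 1) * n.factorial := by
      rw [show n + 2 = (n + 1) + 1 from rfl, Nat.factorial_succ, Nat.factorial_succ]
      push_cast; ring
    rw [h]
    push_cast
    have h1 : ((n : ℝ) + 2) ≠ 0 := by positivity
    have h2 : ((n : ℝ) + 1) ≠ 0 := by positivity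
    field_simp
    ring
  rw [this]
  exact (Real.summable_pow_div_factorial m).mul_left _

lemma tsum_mul1 (m : ℝ) :
    (∑' n : ℕ, (n : ℝ) * m ^ n / n.factorial) = m * Real.exp m := by
  rw [Summable.tsum_eq_zero_add (summable_mul1 m)]
  simp only [Nat.cast_zero, zero_mul, pow_zero, Nat.factorial_zero, Nat.cast_one, zero_div,
    zero_add]
  have : (fun n : ℕ => ((n + 1 : ℕ) : ℝ) * m ^ (n + 1) / (n + 1).factorial)
      = fun n : ℕ => m * (m ^ n / n.factorial) := by
    funext n
    have h : ((n + 1).factorial : ℝ) = (n + 1) * n.factorial := by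
      rw [Nat.factorial_succ]; push_cast; ring
    rw [h]; push_cast
    have hn : ((n : ℝ) + 1) ≠ 0 := by positivity
    field_simp; ring
  rw [tsum_congr (fun n => congrFun this n), tsum_mul_left, ← real_exp_tsum]

lemma tsum_mul2 (m : ℝ) :
    (∑' n : ℕ, (n : ℝ) * ((n : ℝ) - 1) * m ^ n / n.factorial) = m ^ 2 * Real.exp m := by
  have hs := summable_mul2 m
  rw [Summable.tsum_eq_zero_add hs, Summable.tsum_eq_zero_add ((summable_nat_add_iff 1).mpr hs)]
  simp only [Nat.cast_zero, Nat.cast_one]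
  norm_num
  have : (fun n : ℕ => (((n : ℝ) + 1 + 1)) * ((n : ℝ) + 1 + 1 - 1) * m ^ (n + 1 + 1) / ((n + 1 + 1).factorial : ℝ))
      = fun n : ℕ => m ^ 2 * (m ^ n / n.factorial) := by
    funext n
    have h : ((n + 1 + 1).factorial : ℝ) = ((n : ℝ) + 2) * ((n : ℝ) + 1) * n.factorial := by
      rw [Nat.factorial_succ, Nat.factorial_succ]; push_cast; ring
    rw [h]
    have h1 : ((n : ℝ) + 2) ≠ 0 := by positivity
    have h2 : ((n : ℝ) + 1) ≠ 0 := by positivity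
    field_simp; ring
  have h2 : ∀ n : ℕ, ((n:ℝ) + 1 + 1) * ((n:ℝ) + 1) * m ^ (n + 1 + 1) / ((n + 1 + 1).factorial : ℝ)
      = m ^ 2 * (m ^ n / n.factorial) := by
    intro n
    have := congrFun this n
    simpa using this
  rw [tsum_congr h2, tsum_mul_left, ← real_exp_tsum]

lemma summable_sq (m : ℝ) : Summable (fun n : ℕ => (n : ℝ) ^ 2 * m ^ n / n.factorial) := by
  have : (fun n : ℕ => (n : ℝ) ^ 2 * m ^ n / n.factorial)
      = fun n : ℕ => (n : ℝ) * ((n : ℝ) - 1) * m ^ n / n.factorial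
        + (n : ℝ) * m ^ n / n.factorial := by
    funext n; field_simp; ring
  rw [this]
  exact (summable_mul2 m).add (summable_mul1 m)

lemma tsum_sq (m : ℝ) :
    (∑' n : ℕ, (n : ℝ) ^ 2 * m ^ n / n.factorial) = (m ^ 2 + m) * Real.exp m := by
  have heq : (fun n : ℕ => (n : ℝ) ^ 2 * m ^ n / n.factorial)
      = fun n : ℕ => (n : ℝ) * ((n : ℝ) - 1) * m ^ n / n.factorial
        + (n : ℝ) * m ^ n / n.factorial := by
    funext n; field_simp; ring
  rw [heq, Summable.tsum_add (summable_mul2 m) (summable_mul1 m), tsum_mul1, tsum_mul2]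
  ring

lemma summable_sq_ppmf (m : ℝ) : Summable (fun n : ℕ => (n : ℝ) ^ 2 * ppmf m n) := by
  have : (fun n : ℕ => (n : ℝ) ^ 2 * ppmf m n)
      = fun n : ℕ => Real.exp (-m) * ((n : ℝ) ^ 2 * m ^ n / n.factorial) := by
    funext n; unfold ppmf; ring
  rw [this]
  exact (summable_sq m).mul_left _

lemma tsum_sq_ppmf (m : ℝ) : (∑' n : ℕ, (n : ℝ) ^ 2 * ppmf m n) = m ^ 2 + m := by
  have : (fun n : ℕ => (n : ℝ) ^ 2 * ppmf m n)
      = fun n : ℕ => Real.exp (-m) * ((n : ℝ) ^ 2 * m ^ n / n.factorial) := by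
    funext n; unfold ppmf; ring
  rw [this, tsum_mul_left, tsum_sq]
  rw [Real.exp_neg]
  field_simp

lemma sq_eq_sum_odd (n : ℕ) : (n : ℝ) ^ 2 = ∑ k ∈ Finset.range n, (2 * (k : ℝ) + 1) := by
  induction n with
  | zero => simp
  | succ j ih => rw [Finset.sum_range_succ, ← ih]; push_cast; ring

/-- Let `X` (with distribution `q`) be a nonnegative integer-valued random variable
stochastically dominated by `Poisson(m)`, and conditionally on `X` let `Y ~ Binomial(X, p)`
for `p ∈ (0,1]`. Then `P(Y ≥ 1) · E[X | Y ≥ 1] ≤ p m (m+1)`.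
The left-hand side equals `E[X · 1_{Y ≥ 1}] = ∑_x x q(x) (1 - (1-p)^x)`. -/
theorem stmt2 (m p : ℝ) (hm : 0 < m) (hp0 : 0 < p) (hp1 : p ≤ 1)
    (q : ℕ → ℝ) (hq0 : ∀ x, 0 ≤ q x) (hq1 : ∑' x : ℕ, q x = 1)
    (hdom : ∀ n : ℕ, (∑' x : ℕ, if n ≤ x then q x else 0) ≤ ptail m n)
    (hpos : 0 < ∑' x : ℕ, q x * (1 - (1 - p) ^ x)) :
    (∑' x : ℕ, (x : ℝ) * q x * (1 - (1 - p) ^ x)) ≤ p * m * (m + 1) := by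
  have hqsum : Summable q := by
    by_contra h
    rw [tsum_eq_zero_of_not_summable h] at hq1
    norm_num at hq1
  -- nonnegativity of terms
  have hterm : ∀ x : ℕ, 0 ≤ (x : ℝ) * q x * (1 - (1 - p) ^ x) := by
    intro x
    have h1 : (1 - p) ^ x ≤ 1 := by
      apply pow_le_one₀ <;> linarith
    have h0 : (0:ℝ) ≤ x := Nat.cast_nonneg x
    have := hq0 x
    exact mul_nonneg (mul_nonneg h0 this) (by linarith)
  have hRHS : 0 ≤ p * m * (m + 1) := by positivity
  -- Bernoulli: 1 - (1-p)^x ≤ p * x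
  have hbern : ∀ x : ℕ, 1 - (1 - p) ^ x ≤ p * x := by
    intro x
    have h := one_add_mul_le_pow (a := -p) (by linarith) x
    rw [show (1:ℝ) + -p = 1 - p by ring] at h
    nlinarith [h]
  -- key finite bound: ∑_{x < N} x^2 q x ≤ m^2 + m
  have hkey : ∀ N : ℕ, (∑ x ∈ Finset.range N, ((x : ℝ) ^ 2 * q x)) ≤ m ^ 2 + m := by
    intro N
    -- layer cake: x^2 = ∑_{k < N, k+1 ≤ x} (2k+1) for x < N
    have hlayer : ∀ x ∈ Finset.range N,
        ((x : ℝ) ^ 2 * q x) = ∑ k ∈ Finset.range N, (if k + 1 ≤ x then (2 * (k:ℝ) + 1) * q x else 0) := by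
      intro x hx
      rw [Finset.sum_ite, Finset.sum_const_zero, add_zero]
      have hfilter : Finset.filter (fun k => k + 1 ≤ x) (Finset.range N) = Finset.range x := by
        ext k
        simp only [Finset.mem_filter, Finset.mem_range]
        constructor
        · rintro ⟨_, h⟩; omega
        · intro h
          have := Finset.mem_range.mp hx
          exact ⟨by omega, by omega⟩
      rw [hfilter, ← Finset.sum_mul, ← sq_eq_sum_odd x]
    rw [Finset.sum_congr rfl hlayer, Finset.sum_comm]
    -- now bound inner sums by tails
    have hstep : ∀ k ∈ Finset.range N,
        (∑ x ∈ Finset.range N, (if k + 1 ≤ x then (2 * (k:ℝ) + 1) * q x else 0))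
          ≤ (2 * (k:ℝ) + 1) * ptail m (k + 1) := by
      intro k _
      have hs : Summable (fun x : ℕ => if k + 1 ≤ x then q x else 0) := by
        apply Summable.of_nonneg_of_le (fun x => ?_) (fun x => ?_) hqsum
        · split <;> simp [hq0]
        · split <;> simp [hq0]
      have h1 : (∑ x ∈ Finset.range N, (if k + 1 ≤ x then q x else 0))
          ≤ ∑' x : ℕ, if k + 1 ≤ x then q x else 0 := by
        apply Summable.sum_le_tsum _ _ hs
        intro x _
        split <;> simp [hq0]
      have h2 := hdom (k + 1)
      have hk : (0:ℝ) ≤ 2 * (k:ℝ) + 1 := by positivity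
      calc (∑ x ∈ Finset.range N, (if k + 1 ≤ x then (2 * (k:ℝ) + 1) * q x else 0))
          = (2 * (k:ℝ) + 1) * ∑ x ∈ Finset.range N, (if k + 1 ≤ x then q x else 0) := by
            rw [Finset.mul_sum]
            apply Finset.sum_congr rfl
            intro x _
            split <;> simp
        _ ≤ (2 * (k:ℝ) + 1) * ptail m (k + 1) := by
            apply mul_le_mul_of_nonneg_left (le_trans h1 h2) hk
    calc (∑ k ∈ Finset.range N, ∑ x ∈ Finset.range N, (if k + 1 ≤ x then (2 * (k:ℝ) + 1) * q x else 0))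
        ≤ ∑ k ∈ Finset.range N, (2 * (k:ℝ) + 1) * ptail m (k + 1) := Finset.sum_le_sum hstep
      _ ≤ m ^ 2 + m := by
          -- swap finite sum and tsum
          have hsum_if : ∀ k : ℕ, Summable (fun n : ℕ => if k + 1 ≤ n then (2 * (k:ℝ) + 1) * ppmf m n else 0) := by
            intro k
            apply Summable.of_nonneg_of_le (fun n => ?_) (fun n => ?_)
              (((Real.summable_pow_div_factorial m).mul_left (Real.exp (-m))).mul_left (2 * (k:ℝ) + 1))
            · split
              · have := ppmf_nonneg hm.le n; positivity
              · exact le_rfl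
            · have hpp : ppmf m n = Real.exp (-m) * (m ^ n / n.factorial) := by
                unfold ppmf; ring
              have hk : (0:ℝ) ≤ 2 * (k:ℝ) + 1 := by positivity
              have hmn : (0:ℝ) ≤ m ^ n / n.factorial := by positivity
              have hexp : (0:ℝ) ≤ Real.exp (-m) := (Real.exp_pos _).le
              split
              · rw [hpp]
              · positivity
          have hswap : (∑ k ∈ Finset.range N, (2 * (k:ℝ) + 1) * ptail m (k + 1))
              = ∑' n : ℕ, ∑ k ∈ Finset.range N, (if k + 1 ≤ n then (2 * (k:ℝ) + 1) * ppmf m n else 0) := by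
            rw [Summable.tsum_finsetSum (fun k _ => hsum_if k)]
            apply Finset.sum_congr rfl
            intro k _
            unfold ptail
            rw [← tsum_mul_left]
            congr 1
            funext n
            split <;> simp
          rw [hswap]
          have hle : ∀ n : ℕ, (∑ k ∈ Finset.range N, (if k + 1 ≤ n then (2 * (k:ℝ) + 1) * ppmf m n else 0))
              ≤ (n : ℝ) ^ 2 * ppmf m n := by
            intro n
            have hpp := ppmf_nonneg hm.le n
            calc (∑ k ∈ Finset.range N, (if k + 1 ≤ n then (2 * (k:ℝ) + 1) * ppmf m n else 0))
                ≤ ∑ k ∈ Finset.range n, (2 * (k:ℝ) + 1) * ppmf m n := by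
                  rw [Finset.sum_ite, Finset.sum_const_zero, add_zero]
                  apply Finset.sum_le_sum_of_subset_of_nonneg
                  · intro k hk
                    simp only [Finset.mem_filter, Finset.mem_range] at hk ⊢
                    omega
                  · intro k _ _
                    positivity
              _ = (n : ℝ) ^ 2 * ppmf m n := by
                  rw [← Finset.sum_mul, ← sq_eq_sum_odd n]
          have hsum_lhs : Summable (fun n : ℕ => ∑ k ∈ Finset.range N, (if k + 1 ≤ n then (2 * (k:ℝ) + 1) * ppmf m n else 0)) :=
            summable_sum (fun k _ => hsum_if k)
          calc (∑' n : ℕ, ∑ k ∈ Finset.range N, (if k + 1 ≤ n then (2 * (k:ℝ) + 1) * ppmf m n else 0))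
              ≤ ∑' n : ℕ, (n : ℝ) ^ 2 * ppmf m n := Summable.tsum_le_tsum hle hsum_lhs (summable_sq_ppmf m)
            _ = m ^ 2 + m := tsum_sq_ppmf m
  -- main argument
  by_cases hs : Summable (fun x : ℕ => (x : ℝ) * q x * (1 - (1 - p) ^ x))
  · apply Summable.tsum_le_of_sum_le hs
    intro s
    obtain ⟨N, hN⟩ : ∃ N, s ⊆ Finset.range N := ⟨(s.sup id) + 1, fun x hx =>
      Finset.mem_range.mpr (Nat.lt_succ_of_le (Finset.le_sup (f := id) hx))⟩
    calc (∑ x ∈ s, (x : ℝ) * q x * (1 - (1 - p) ^ x))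
        ≤ ∑ x ∈ Finset.range N, (x : ℝ) * q x * (1 - (1 - p) ^ x) :=
          Finset.sum_le_sum_of_subset_of_nonneg hN (fun x _ _ => hterm x)
      _ ≤ ∑ x ∈ Finset.range N, p * ((x : ℝ) ^ 2 * q x) := by
          apply Finset.sum_le_sum
          intro x _
          have h1 := hbern x
          have h2 := hq0 x
          have h0 : (0:ℝ) ≤ x := Nat.cast_nonneg x
          calc (x : ℝ) * q x * (1 - (1 - p) ^ x)
              ≤ (x : ℝ) * q x * (p * x) :=
                mul_le_mul_of_nonneg_left h1 (mul_nonneg h0 h2)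
            _ = p * ((x : ℝ) ^ 2 * q x) := by ring
      _ = p * ∑ x ∈ Finset.range N, ((x : ℝ) ^ 2 * q x) := by rw [Finset.mul_sum]
      _ ≤ p * (m ^ 2 + m) := mul_le_mul_of_nonneg_left (hkey N) hp0.le
      _ = p * m * (m + 1) := by ring
  · rw [tsum_eq_zero_of_not_summable hs]
    exact hRHS
end

section
/- If X ~ Poisson(m) and, conditionally on X, Y ~ Binomial(X, 1/2) with X − Y independent of Y in the usual Poisson thinning sense, then the conditional distribution of X given Y ≥ 1 is stochastically dominated by 1 + Poisson(m). -/
open scoped Classical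

/-- weight -/
noncomputable def wgt (k x : ℕ) : ℝ := if x = k then 2 ^ k else if k + 1 ≤ x then 1 else 0

lemma sum_choose_le {k s : ℕ} (h : k ≤ s) :
    ∑ x ∈ Finset.range (k + 1), s.choose x ≤ 2 ^ k * s.choose k := by
  calc ∑ x ∈ Finset.range (k + 1), s.choose x
      ≤ ∑ x ∈ Finset.range (k + 1), k.choose x * s.choose k := by
        refine Finset.sum_le_sum fun x hx => ?_
        have hxk : x ≤ k := Nat.lt_succ_iff.mp (Finset.mem_range.mp hx)
        have h1 := Nat.choose_mul (n := s) hxk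
        have h2 : 1 ≤ (s - x).choose (k - x) := Nat.choose_pos (Nat.sub_le_sub_right h x)
        calc s.choose x = s.choose x * 1 := (mul_one _).symm
          _ ≤ s.choose x * (s - x).choose (k - x) := Nat.mul_le_mul_left _ h2
          _ = s.choose k * k.choose x := h1.symm
          _ = k.choose x * s.choose k := Nat.mul_comm _ _
    _ = (∑ x ∈ Finset.range (k + 1), k.choose x) * s.choose k := (Finset.sum_mul _ _ _).symm
    _ = 2 ^ k * s.choose k := by rw [Nat.sum_range_choose]

lemma key (k s : ℕ) (h : k ≤ s) :
    (2 : ℝ) ^ s ≤ ∑ x ∈ Finset.range (s + 1), (s.choose x : ℝ) * wgt k x := by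
  have hsplit : ∀ f : ℕ → ℝ, ∑ x ∈ Finset.range (s + 1), f x
      = ∑ x ∈ Finset.range (k + 1), f x + ∑ x ∈ Finset.Ico (k + 1) (s + 1), f x := by
    intro f
    rw [Finset.range_eq_Ico, Finset.range_eq_Ico]
    exact (Finset.sum_Ico_consecutive f (Nat.zero_le (k+1)) (by omega : k + 1 ≤ s + 1)).symm
  have h1 : ∑ x ∈ Finset.range (k + 1), (s.choose x : ℝ) * wgt k x
      = (s.choose k : ℝ) * 2 ^ k := by
    have : ∀ x ∈ Finset.range (k + 1), (s.choose x : ℝ) * wgt k x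
        = if x = k then (s.choose k : ℝ) * 2 ^ k else 0 := by
      intro x hx
      have hxk : x ≤ k := Nat.lt_succ_iff.mp (Finset.mem_range.mp hx)
      unfold wgt
      by_cases hxe : x = k
      · simp [hxe]
      · have : ¬ (k + 1 ≤ x) := by omega
        simp [hxe, this]
    rw [Finset.sum_congr rfl this, Finset.sum_ite_eq' (Finset.range (k + 1)) k]
    simp
  have h2 : ∑ x ∈ Finset.Ico (k + 1) (s + 1), (s.choose x : ℝ) * wgt k x
      = ∑ x ∈ Finset.Ico (k + 1) (s + 1), (s.choose x : ℝ) := by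
    refine Finset.sum_congr rfl fun x hx => ?_
    have hx' := Finset.mem_Ico.mp hx
    have hxe : x ≠ k := by omega
    unfold wgt
    simp [hxe, hx'.1]
  have h3 : (2 : ℝ) ^ s = ∑ x ∈ Finset.range (s + 1), (s.choose x : ℝ) := by
    rw [← Nat.cast_sum, Nat.sum_range_choose]; push_cast; ring
  have h4 : ∑ x ∈ Finset.range (k + 1), (s.choose x : ℝ) ≤ (2 : ℝ) ^ k * s.choose k := by
    rw [← Nat.cast_sum]
    calc ((∑ x ∈ Finset.range (k + 1), s.choose x : ℕ) : ℝ)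
        ≤ ((2 ^ k * s.choose k : ℕ) : ℝ) := Nat.cast_le.mpr (sum_choose_le h)
      _ = (2 : ℝ) ^ k * s.choose k := by push_cast; ring
  rw [hsplit fun x => (s.choose x : ℝ) * wgt k x, h1, h2, h3,
    hsplit fun x => (s.choose x : ℝ)]
  linarith

lemma exp_tsum (x : ℝ) : Real.exp x = ∑' n : ℕ, x ^ n / n.factorial := by
  rw [Real.exp_eq_exp_ℝ, NormedSpace.exp_eq_tsum_div]

lemma summable_ite {x : ℝ} (hx : 0 ≤ x) (k : ℕ) :
    Summable (fun n : ℕ => if k ≤ n then x ^ n / n.factorial else 0) := by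
  refine Summable.of_nonneg_of_le (fun n => ?_) (fun n => ?_)
    (Real.summable_pow_div_factorial x)
  · split_ifs with h
    · positivity
    · exact le_rfl
  · split_ifs with h
    · exact le_rfl
    · positivity

lemma main_ineq (m : ℝ) (hm : 0 < m) (k : ℕ) :
    (∑' x : ℕ, if k ≤ x then m ^ x / x.factorial else 0)
      ≤ Real.exp (m / 2) *
        ((m : ℝ) ^ k / k.factorial
          + ∑' x : ℕ, if k + 1 ≤ x then (m / 2) ^ x / x.factorial else 0) := by
  have hm2 : (0 : ℝ) < m / 2 := by linarith
  set c : ℕ → ℝ := fun x => (m / 2) ^ x / x.factorial with hc_def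
  have hcpos : ∀ x, 0 ≤ c x := fun x => by positivity
  have hc : Summable c := Real.summable_pow_div_factorial _
  set g : ℕ → ℝ := fun x => wgt k x * c x with hg_def
  have hwpos : ∀ x, 0 ≤ wgt k x := by
    intro x; unfold wgt; split_ifs <;> norm_num
  have hgpos : ∀ x, 0 ≤ g x := fun x => mul_nonneg (hwpos x) (hcpos x)
  have hwle : ∀ x, wgt k x ≤ 2 ^ k := by
    intro x; unfold wgt; split_ifs with h1 h2
    · exact le_rfl
    · exact one_le_pow₀ one_le_two
    · positivity
  have hg : Summable g := by
    refine Summable.of_nonneg_of_le hgpos (fun x => ?_) (hc.mul_left (2 ^ k))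
    exact mul_le_mul_of_nonneg_right (hwle x) (hcpos x)
  have hsum_g : ∑' x, g x
      = m ^ k / k.factorial + ∑' x : ℕ, if k + 1 ≤ x then c x else 0 := by
    have hsplit : g = fun x => (if x = k then m ^ k / k.factorial else 0)
        + (if k + 1 ≤ x then c x else 0) := by
      funext x
      rw [hg_def]
      simp only
      unfold wgt
      by_cases h1 : x = k
      · subst h1
        rw [if_pos rfl, if_pos rfl, if_neg (by omega)]
        rw [hc_def]
        simp only
        rw [← mul_div_assoc, ← mul_pow]
        norm_num [mul_div_cancel₀]
      · rw [if_neg h1, if_neg h1]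
        by_cases h2 : k + 1 ≤ x
        · rw [if_pos h2, if_pos h2, one_mul, zero_add]
        · rw [if_neg h2, if_neg h2, zero_mul, add_zero]
    rw [hsplit]
    rw [Summable.tsum_add ((hasSum_ite_eq k (m ^ k / k.factorial : ℝ)).summable)
      (summable_ite hm2.le (k + 1))]
    rw [tsum_ite_eq]
  have hfg : Summable fun p : ℕ × ℕ => g p.1 * c p.2 :=
    hg.mul_of_nonneg hc hgpos hcpos
  have key_term : ∀ s : ℕ, (if k ≤ s then m ^ s / s.factorial else 0)
      ≤ ∑ x ∈ Finset.range (s + 1), g x * c (s - x) := by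
    intro s
    by_cases hks : k ≤ s
    · rw [if_pos hks]
      have hterm : ∀ x ∈ Finset.range (s + 1), g x * c (s - x)
          = (s.choose x : ℝ) * wgt k x * ((m / 2) ^ s / s.factorial) := by
        intro x hx
        have hxs : x ≤ s := Nat.lt_succ_iff.mp (Finset.mem_range.mp hx)
        rw [hg_def, hc_def]
        simp only
        have hpow : (m / 2) ^ x * (m / 2) ^ (s - x) = (m / 2) ^ s := by
          rw [← pow_add]; congr 1; omega
        have hfact : ((s.choose x : ℝ)) * (x.factorial : ℝ) * ((s - x).factorial : ℝ)
            = (s.factorial : ℝ) := by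
          exact_mod_cast congrArg (Nat.cast (R := ℝ))
            (Nat.choose_mul_factorial_mul_factorial hxs)
        have hx0 : (x.factorial : ℝ) ≠ 0 := Nat.cast_ne_zero.mpr x.factorial_ne_zero
        have hsx0 : ((s - x).factorial : ℝ) ≠ 0 := Nat.cast_ne_zero.mpr (s - x).factorial_ne_zero
        have hC0 : ((s.choose x : ℕ) : ℝ) ≠ 0 :=
          Nat.cast_ne_zero.mpr (Nat.choose_pos hxs).ne'
        have hkey : (m / 2) ^ x / (x.factorial : ℝ) * ((m / 2) ^ (s - x) / (s - x).factorial)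
            = (s.choose x : ℝ) * ((m / 2) ^ s / s.factorial) := by
          rw [div_mul_div_comm, hpow, ← hfact]
          field_simp
        rw [mul_assoc, hkey]
        ring
      rw [Finset.sum_congr rfl hterm]
      rw [← Finset.sum_mul]
      have h2s : (2 : ℝ) ^ s * ((m / 2) ^ s / s.factorial) = m ^ s / s.factorial := by
        rw [← mul_div_assoc, ← mul_pow]
        norm_num [mul_div_cancel₀]
      calc m ^ s / (s.factorial : ℝ)
          = (2 : ℝ) ^ s * ((m / 2) ^ s / s.factorial) := h2s.symm
        _ ≤ (∑ x ∈ Finset.range (s + 1), (s.choose x : ℝ) * wgt k x)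
              * ((m / 2) ^ s / s.factorial) := by
            refine mul_le_mul_of_nonneg_right (key k s hks) (by positivity)
    · rw [if_neg hks]
      exact Finset.sum_nonneg fun x _ => mul_nonneg (hgpos x) (hcpos _)
  have hcauchy := hg.tsum_mul_tsum_eq_tsum_sum_range hc hfg
  have hsummable_rhs := summable_sum_mul_range_of_summable_mul hfg
  calc (∑' x : ℕ, if k ≤ x then m ^ x / x.factorial else 0)
      ≤ ∑' s : ℕ, ∑ x ∈ Finset.range (s + 1), g x * c (s - x) :=
        Summable.tsum_le_tsum key_term (summable_ite hm.le k) hsummable_rhs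
    _ = (∑' x, g x) * (∑' x, c x) := hcauchy.symm
    _ = Real.exp (m / 2) *
        ((m : ℝ) ^ k / k.factorial
          + ∑' x : ℕ, if k + 1 ≤ x then (m / 2) ^ x / x.factorial else 0) := by
        rw [hsum_g, exp_tsum (m / 2), mul_comm]

/-- If `X ~ Poisson(m)` and, conditionally on `X`, `Y ~ Binomial(X, 1/2)` (a 1/2-thinning),
then `X` conditioned on `Y ≥ 1` is stochastically dominated by `1 + Poisson(m)`:
for every `n`, `P(X ≥ n | Y ≥ 1) ≤ P(1 + Z ≥ n)` with `Z ~ Poisson(m)`.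
Here `P(X ≥ n ∧ Y ≥ 1) = ∑_{x ≥ n} ppmf m x (1 - (1/2)^x)`. -/
theorem stmt3 (m : ℝ) (hm : 0 < m) (n : ℕ) :
    (∑' x : ℕ, if n ≤ x then ppmf m x * (1 - (1 / 2 : ℝ) ^ x) else 0) /
      (∑' x : ℕ, ppmf m x * (1 - (1 / 2 : ℝ) ^ x)) ≤ ptail m (n - 1) := by
  have hm2 : (0 : ℝ) < m / 2 := by linarith
  set a : ℕ → ℝ := fun x => m ^ x / x.factorial with ha_def
  set c : ℕ → ℝ := fun x => (m / 2) ^ x / x.factorial with hc_def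
  have Sa : Summable a := Real.summable_pow_div_factorial m
  have Sc : Summable c := Real.summable_pow_div_factorial (m / 2)
  have hterm : ∀ x : ℕ, ppmf m x * (1 - (1 / 2 : ℝ) ^ x)
      = Real.exp (-m) * (a x - c x) := by
    intro x
    rw [ppmf, ha_def, hc_def]
    simp only
    have : ((1 : ℝ) / 2) ^ x * m ^ x = (m / 2) ^ x := by
      rw [← mul_pow]; ring_nf
    field_simp
    linarith [this]
  have hE : Real.exp (-(m / 2)) * Real.exp (m / 2) = 1 := by
    rw [← Real.exp_add]; norm_num
  have hEm : Real.exp (-m) * Real.exp m = 1 := by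
    rw [← Real.exp_add]; norm_num
  have hEmh : Real.exp (-m) * Real.exp (m / 2) = Real.exp (-(m / 2)) := by
    rw [← Real.exp_add]; ring_nf
  -- denominator
  have hD : (∑' x : ℕ, ppmf m x * (1 - (1 / 2 : ℝ) ^ x)) = 1 - Real.exp (-(m / 2)) := by
    have : (fun x : ℕ => ppmf m x * (1 - (1 / 2 : ℝ) ^ x))
        = fun x => Real.exp (-m) * (a x - c x) := funext hterm
    rw [this, tsum_mul_left, Summable.tsum_sub Sa Sc, ← exp_tsum m, ← exp_tsum (m / 2)]
    rw [mul_sub, hEm, hEmh]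
  have hDpos : 0 < 1 - Real.exp (-(m / 2)) := by
    have : Real.exp (-(m / 2)) < 1 := by
      rw [← Real.exp_zero]
      exact Real.exp_lt_exp.mpr (by linarith)
    linarith
  -- A and C tails
  set A : ℕ → ℝ := fun j => ∑' x : ℕ, if j ≤ x then a x else 0 with hA_def
  set C : ℕ → ℝ := fun j => ∑' x : ℕ, if j ≤ x then c x else 0 with hC_def
  have hN : ∀ j : ℕ, (∑' x : ℕ, if j ≤ x then ppmf m x * (1 - (1 / 2 : ℝ) ^ x) else 0)
      = Real.exp (-m) * (A j - C j) := by
    intro j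
    have h1 : (fun x : ℕ => if j ≤ x then ppmf m x * (1 - (1 / 2 : ℝ) ^ x) else 0)
        = fun x => Real.exp (-m) * ((if j ≤ x then a x else 0) - (if j ≤ x then c x else 0)) := by
      funext x
      by_cases h : j ≤ x
      · rw [if_pos h, if_pos h, if_pos h, hterm x]
      · rw [if_neg h, if_neg h, if_neg h]; ring
    rw [h1, tsum_mul_left, Summable.tsum_sub (summable_ite hm.le j) (summable_ite hm2.le j)]
  have hP : ∀ j : ℕ, ptail m j = Real.exp (-m) * A j := by
    intro j
    rw [ptail, hA_def]
    rw [← tsum_mul_left]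
    congr 1
    funext x
    by_cases h : j ≤ x
    · rw [if_pos h, if_pos h, ppmf, ha_def, mul_div_assoc]
    · rw [if_neg h, if_neg h, mul_zero]
  rw [hD, div_le_iff₀ hDpos]
  rcases n with _ | k
  · -- n = 0
    have hA0 : A 0 = Real.exp m := by
      rw [hA_def]
      simp only [Nat.zero_le, if_true]
      exact (exp_tsum m).symm
    have hC0 : C 0 = Real.exp (m / 2) := by
      rw [hC_def]
      simp only [Nat.zero_le, if_true]
      exact (exp_tsum (m / 2)).symm
    have hP0 : ptail m (0 - 1) = 1 := by
      show ptail m 0 = 1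
      rw [hP 0, hA0, hEm]
    rw [hP0, one_mul, hN 0, hA0, hC0, mul_sub, hEm, hEmh]
  · -- n = k + 1
    have hsub : k + 1 - 1 = k := rfl
    rw [hsub, hN (k + 1), hP k]
    have fact1 : A k = a k + A (k + 1) := by
      have h1 : (fun x : ℕ => if k ≤ x then a x else 0)
          = fun x => (if x = k then a k else 0) + (if k + 1 ≤ x then a x else 0) := by
        funext x
        by_cases h : x = k
        · subst h; rw [if_pos rfl, if_pos le_rfl, if_neg (by omega), add_zero]
        · by_cases h2 : k + 1 ≤ x
          · rw [if_pos (by omega), if_neg h, if_pos h2, zero_add]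
          · rw [if_neg (by omega), if_neg h, if_neg h2, add_zero]
      rw [hA_def]
      simp only
      rw [h1, Summable.tsum_add ((hasSum_ite_eq k (a k)).summable) (summable_ite hm.le (k + 1)),
        tsum_ite_eq]
    have fact2 : Real.exp (-(m / 2)) * A k ≤ a k + C (k + 1) := by
      have h1 := main_ineq m hm k
      calc Real.exp (-(m / 2)) * A k
          ≤ Real.exp (-(m / 2)) * (Real.exp (m / 2) * (a k + C (k + 1))) :=
            mul_le_mul_of_nonneg_left h1 (Real.exp_nonneg _)
        _ = a k + C (k + 1) := by rw [← mul_assoc, hE, one_mul]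
    have core : A (k + 1) - C (k + 1) ≤ A k * (1 - Real.exp (-(m / 2))) := by
      have hexp : A k * (1 - Real.exp (-(m / 2))) = A k - Real.exp (-(m / 2)) * A k := by
        ring
      linarith
    calc Real.exp (-m) * (A (k + 1) - C (k + 1))
        ≤ Real.exp (-m) * (A k * (1 - Real.exp (-(m / 2)))) :=
          mul_le_mul_of_nonneg_left core (Real.exp_nonneg _)
      _ = Real.exp (-m) * A k * (1 - Real.exp (-(m / 2))) := by ring
end

section
/- In a multigraph on the leaves of a binary tree T where each pair of leaves x, y is independently joined by Po(2^{1−d_T(x,y)}λ) parallel edges, for any fixed edge uv of T the probability that no edge of the multigraph has endpoints in different components of T − uv is at least e^{−λ}. -/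
set_option linter.unusedSectionVars false
set_option linter.unusedVariables false


open scoped Classical

open SimpleGraph Finset

section Aux

variable {V : Type*} [Fintype V] {G : SimpleGraph V}

private lemma bridge_aux (hA : G.IsAcyclic) {a b : V} (hab : G.Adj a b) :
    ¬ (G.deleteEdges {s(a, b)}).Reachable a b := by
  have h := (isAcyclic_iff_forall_adj_isBridge.mp hA) hab
  rw [isBridge_iff] at h
  exact h

private lemma edge_mem_walk {e : Sym2 V} {p q : V}
    (h : ¬ (G.deleteEdges {e}).Reachable p q) (W : G.Walk p q) : e ∈ W.edges := by
  by_contra he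
  exact h ⟨W.toDeleteEdges {e} (fun e' he' hs => he (Set.mem_singleton_iff.mp hs ▸ he'))⟩

private lemma reach_del_of_avoid {a b p q : V} (W : G.Walk p q) (ha : a ∉ W.support) :
    (G.deleteEdges {s(a, b)}).Reachable p q :=
  ⟨W.toDeleteEdges _ fun e he hs => ha (by
    rw [Set.mem_singleton_iff] at hs; subst hs
    exact W.fst_mem_support_of_mem_edges he)⟩

private lemma dist_decomp {p q : V} (W : G.Walk p q) (hW : W.length = G.dist p q) {m : V}
    (hm : m ∈ W.support) : G.dist p m + G.dist m q ≤ G.dist p q := by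
  have h := congr_arg Walk.length (W.take_spec hm)
  rw [Walk.length_append] at h
  calc G.dist p m + G.dist m q ≤ (W.takeUntil m hm).length + (W.dropUntil m hm).length :=
        Nat.add_le_add (dist_le _) (dist_le _)
    _ = W.length := h
    _ = G.dist p q := hW

private lemma not_mem_support_of_bridge (hA : G.IsAcyclic) {c r x : V} (hcr : G.Adj c r)
    (W : (G.deleteEdges {s(c, r)}).Walk c x) : r ∉ W.support := fun hr =>
  bridge_aux hA hcr ⟨W.takeUntil r hr⟩

private lemma support_mapLe {G' : SimpleGraph V} (h : G' ≤ G) {p q : V} (W : G'.Walk p q) :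
    (W.mapLe h).support = W.support := by
  rw [Walk.mapLe, Walk.support_map, show ⇑(Hom.ofLE h) = id from rfl,
    List.map_id]

private lemma dist_step (hT : G.IsTree) {r c x : V} (hrc : G.Adj r c)
    (hx : (G.deleteEdges {s(r, c)}).Reachable c x) : G.dist r x = G.dist c x + 1 := by
  have hb := bridge_aux hT.IsAcyclic hrc
  have hnr : ¬ (G.deleteEdges {s(r, c)}).Reachable r x := fun h => hb (h.trans hx.symm)
  obtain ⟨W, hW⟩ := (hT.isConnected.preconnected r x).exists_walk_length_eq_dist
  have hmem : s(r, c) ∈ W.edges := edge_mem_walk hnr W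
  have hc : c ∈ W.support := W.snd_mem_support_of_mem_edges hmem
  have h1 : G.dist r c = 1 := dist_eq_one_iff_adj.mpr hrc
  have h2 := dist_decomp W hW hc
  rw [h1] at h2
  have h3 : G.dist r x ≤ G.dist r c + G.dist c x := hT.isConnected.dist_triangle
  rw [h1] at h3
  omega

private lemma side_mono (hT : G.IsTree) {r b c x : V} (hrc : G.Adj r c) (hcb : c ≠ b)
    (hx : (G.deleteEdges {s(c, r)}).Reachable c x) :
    (G.deleteEdges {s(r, b)}).Reachable r x := by
  obtain ⟨W⟩ := hx
  have hr : r ∉ W.support := not_mem_support_of_bridge hT.IsAcyclic hrc.symm W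
  have hr' : r ∉ (W.mapLe (G.deleteEdges_le _)).support := by rwa [support_mapLe]
  have h1 : (G.deleteEdges {s(r, b)}).Reachable c x :=
    reach_del_of_avoid (W.mapLe (G.deleteEdges_le _)) hr'
  have h2 : (G.deleteEdges {s(r, b)}).Adj r c := by
    rw [deleteEdges_adj]
    refine ⟨hrc, ?_⟩
    simp only [Set.mem_singleton_iff, Sym2.congr_right]
    exact hcb
  exact h2.reachable.trans h1

private lemma exists_branch (hT : G.IsTree) {r b x : V} (hxr : x ≠ r)
    (hx : (G.deleteEdges {s(r, b)}).Reachable r x) :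
    ∃ c, G.Adj r c ∧ c ≠ b ∧ (G.deleteEdges {s(c, r)}).Reachable c x := by
  obtain ⟨p, hp⟩ : ∃ p : (G.deleteEdges {s(r, b)}).Walk r x, p.IsPath :=
    hx.elim fun w => ⟨w.bypass, w.bypass_isPath⟩
  cases p with
  | nil => exact absurd rfl hxr.symm
  | @cons _ c _ h q =>
    rw [Walk.cons_isPath_iff] at hp
    obtain ⟨hq, hrq⟩ := hp
    rw [deleteEdges_adj] at h
    obtain ⟨hadj, hne⟩ := h
    have hcb : c ≠ b := by
      intro he; subst he
      exact hne rfl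
    refine ⟨c, hadj, hcb, ?_⟩
    have hrq' : r ∉ (q.mapLe (G.deleteEdges_le _)).support := by rwa [support_mapLe]
    have := reach_del_of_avoid (a := r) (b := c) (q.mapLe (G.deleteEdges_le _)) hrq'
    rwa [show s(c, r) = s(r, c) from Sym2.eq_swap]

private lemma branch_unique (hT : G.IsTree) {r c₁ c₂ x : V} (h1 : G.Adj r c₁) (h2 : G.Adj r c₂)
    (hne : c₁ ≠ c₂) (hx1 : (G.deleteEdges {s(c₁, r)}).Reachable c₁ x)
    (hx2 : (G.deleteEdges {s(c₂, r)}).Reachable c₂ x) : False := by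
  obtain ⟨W1⟩ := hx1
  obtain ⟨W2⟩ := hx2
  have hr1 : r ∉ W1.support := not_mem_support_of_bridge hT.IsAcyclic h1.symm W1
  have hr2 : r ∉ W2.support := not_mem_support_of_bridge hT.IsAcyclic h2.symm W2
  set W : G.Walk c₁ c₂ :=
    (W1.mapLe (G.deleteEdges_le _)).append (W2.mapLe (G.deleteEdges_le _)).reverse with hWdef
  have hr : r ∉ W.support := by
    rw [hWdef]
    intro hmem
    rw [Walk.mem_support_append_iff] at hmem
    rcases hmem with hmem | hmem
    · rw [support_mapLe] at hmem; exact hr1 hmem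
    · rw [Walk.support_reverse, List.mem_reverse, support_mapLe] at hmem; exact hr2 hmem
  have hreach : (G.deleteEdges {s(r, c₁)}).Reachable c₁ c₂ := reach_del_of_avoid W hr
  have hadj : (G.deleteEdges {s(r, c₁)}).Adj c₂ r := by
    rw [deleteEdges_adj]
    refine ⟨h2.symm, ?_⟩
    simp only [Set.mem_singleton_iff]
    intro he
    rw [show s(c₂, r) = s(r, c₂) from Sym2.eq_swap, Sym2.congr_right] at he
    exact hne he.symm
  exact bridge_aux hT.IsAcyclic h1 ((hreach.trans hadj.reachable).symm)

private lemma kraft [DecidableRel G.Adj] (hT : G.IsTree) (hdeg : ∀ v : V, G.degree v ≤ 3) :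
    ∀ (n : ℕ) (r b : V), G.Adj r b →
      (univ.filter fun x => (G.deleteEdges {s(r, b)}).Reachable r x).card = n →
      ∑ x ∈ univ.filter
          (fun x => G.degree x = 1 ∧ (G.deleteEdges {s(r, b)}).Reachable r x),
        (2 : ℝ) ^ (-(G.dist r x : ℤ)) ≤ 1 := by
  intro n
  induction n using Nat.strong_induction_on with
  | _ n IH =>
    intro r b hrb hcard
    by_cases hdr : G.degree r = 1
    · -- r is a leaf: its side is just {r}
      have hnb : G.neighborFinset r = {b} := by
        rw [← card_neighborFinset_eq_degree] at hdr
        obtain ⟨a, ha⟩ := Finset.card_eq_one.mp hdr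
        have hb : b ∈ G.neighborFinset r := by rw [mem_neighborFinset]; exact hrb
        rw [ha] at hb ⊢
        rw [Finset.mem_singleton] at hb
        rw [hb]
      have hsub : (univ.filter
          (fun x => G.degree x = 1 ∧ (G.deleteEdges {s(r, b)}).Reachable r x)) ⊆ {r} := by
        intro x hx
        rw [Finset.mem_filter] at hx
        rw [Finset.mem_singleton]
        by_contra hxr
        obtain ⟨c, hc1, hc2, _⟩ := exists_branch hT hxr hx.2.2
        have : c ∈ G.neighborFinset r := by rw [mem_neighborFinset]; exact hc1
        rw [hnb, Finset.mem_singleton] at this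
        exact hc2 this
      calc ∑ x ∈ univ.filter
            (fun x => G.degree x = 1 ∧ (G.deleteEdges {s(r, b)}).Reachable r x),
            (2 : ℝ) ^ (-(G.dist r x : ℤ))
          ≤ ∑ x ∈ {r}, (2 : ℝ) ^ (-(G.dist r x : ℤ)) :=
            Finset.sum_le_sum_of_subset_of_nonneg hsub
              (fun i _ _ => zpow_nonneg (by norm_num) _)
        _ = 1 := by rw [Finset.sum_singleton, SimpleGraph.dist_self]; norm_num
    · -- r is internal: split over the children
      set N := G.neighborFinset r \ {b} with hN
      have hNmem : ∀ c, c ∈ N ↔ G.Adj r c ∧ c ≠ b := by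
        intro c
        rw [hN, Finset.mem_sdiff, mem_neighborFinset, Finset.mem_singleton]
      have hNcard : N.card ≤ 2 := by
        have hb : b ∈ G.neighborFinset r := by rw [mem_neighborFinset]; exact hrb
        have h3 := hdeg r
        rw [← card_neighborFinset_eq_degree] at h3
        have := Finset.card_sdiff_of_subset (Finset.singleton_subset_iff.mpr hb)
        rw [← hN] at this
        rw [this, Finset.card_singleton]
        omega
      have hpart : (univ.filter
            (fun x => G.degree x = 1 ∧ (G.deleteEdges {s(r, b)}).Reachable r x)) =
          N.biUnion (fun c => univ.filter
            (fun x => G.degree x = 1 ∧ (G.deleteEdges {s(c, r)}).Reachable c x)) := by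
        ext x
        simp only [Finset.mem_biUnion, Finset.mem_filter, Finset.mem_univ, true_and]
        constructor
        · rintro ⟨hx1, hx2⟩
          have hxr : x ≠ r := fun he => hdr (he ▸ hx1)
          obtain ⟨c, hc1, hc2, hc3⟩ := exists_branch hT hxr hx2
          exact ⟨c, (hNmem c).mpr ⟨hc1, hc2⟩, hx1, hc3⟩
        · rintro ⟨c, hc, hx1, hx2⟩
          obtain ⟨hc1, hc2⟩ := (hNmem c).mp hc
          exact ⟨hx1, side_mono hT hc1 hc2 hx2⟩
      have hdisj : (N : Set V).PairwiseDisjoint (fun c => univ.filter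
          (fun x => G.degree x = 1 ∧ (G.deleteEdges {s(c, r)}).Reachable c x)) := by
        intro c₁ hc₁ c₂ hc₂ hne
        rw [Finset.mem_coe] at hc₁ hc₂
        obtain ⟨h1, _⟩ := (hNmem c₁).mp hc₁
        obtain ⟨h2, _⟩ := (hNmem c₂).mp hc₂
        rw [Function.onFun, Finset.disjoint_left]
        intro x hx1 hx2
        rw [Finset.mem_filter] at hx1 hx2
        exact branch_unique hT h1 h2 hne hx1.2.2 hx2.2.2
      have key : ∀ c ∈ N, (∑ x ∈ univ.filter
            (fun x => G.degree x = 1 ∧ (G.deleteEdges {s(c, r)}).Reachable c x),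
            (2 : ℝ) ^ (-(G.dist r x : ℤ))) ≤ 1 / 2 := by
        intro c hc
        obtain ⟨hc1, hc2⟩ := (hNmem c).mp hc
        have hsub : (univ.filter fun x => (G.deleteEdges {s(c, r)}).Reachable c x) ⊂
            (univ.filter fun x => (G.deleteEdges {s(r, b)}).Reachable r x) := by
          rw [Finset.ssubset_iff_of_subset]
          · refine ⟨r, ?_, ?_⟩
            · rw [Finset.mem_filter]; exact ⟨Finset.mem_univ r, Reachable.refl r⟩
            · rw [Finset.mem_filter]
              rintro ⟨-, h⟩
              exact bridge_aux hT.IsAcyclic hc1.symm h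
          · intro x hx
            rw [Finset.mem_filter] at hx ⊢
            exact ⟨Finset.mem_univ x, side_mono hT hc1 hc2 hx.2⟩
        have hlt : (univ.filter fun x =>
            (G.deleteEdges {s(c, r)}).Reachable c x).card < n := by
          rw [← hcard]; exact Finset.card_lt_card hsub
        have hIH := IH _ hlt c r hc1.symm rfl
        have hstep : ∀ x ∈ univ.filter
            (fun x => G.degree x = 1 ∧ (G.deleteEdges {s(c, r)}).Reachable c x),
            (2 : ℝ) ^ (-(G.dist r x : ℤ)) = (2 : ℝ) ^ (-(G.dist c x : ℤ)) * (2 : ℝ)⁻¹ := by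
          intro x hx
          rw [Finset.mem_filter] at hx
          have hd : G.dist r x = G.dist c x + 1 :=
            dist_step hT hc1 (by rw [show s(r, c) = s(c, r) from Sym2.eq_swap]; exact hx.2.2)
          rw [hd]
          rw [show (-(((G.dist c x + 1 : ℕ)) : ℤ)) = (-(G.dist c x : ℤ)) + (-1) by
            push_cast; ring]
          rw [zpow_add₀ (by norm_num : (2 : ℝ) ≠ 0), zpow_neg_one]
        rw [Finset.sum_congr rfl hstep, ← Finset.sum_mul]
        have h0 : (0 : ℝ) ≤ 2⁻¹ := by norm_num
        calc (∑ x ∈ univ.filter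
              (fun x => G.degree x = 1 ∧ (G.deleteEdges {s(c, r)}).Reachable c x),
              (2 : ℝ) ^ (-(G.dist c x : ℤ))) * 2⁻¹
            ≤ 1 * 2⁻¹ := mul_le_mul_of_nonneg_right hIH h0
          _ = 1 / 2 := by norm_num
      rw [hpart, Finset.sum_biUnion hdisj]
      calc ∑ c ∈ N, ∑ x ∈ univ.filter
            (fun x => G.degree x = 1 ∧ (G.deleteEdges {s(c, r)}).Reachable c x),
            (2 : ℝ) ^ (-(G.dist r x : ℤ))
          ≤ ∑ _c ∈ N, (1 / 2 : ℝ) := Finset.sum_le_sum key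
        _ = N.card * (1 / 2) := by rw [Finset.sum_const, nsmul_eq_mul]
        _ ≤ 2 * (1 / 2) := by
            have : (N.card : ℝ) ≤ 2 := by exact_mod_cast hNcard
            nlinarith
        _ = 1 := by norm_num

end Aux

/-- In the `T`-Poisson edge model on the leaves of a finite binary tree `T` (each pair of
leaves `x`, `y` is independently joined by `Po(2^{1−d_T(x,y)} λ)` parallel edges), for any
fixed edge `uv` of `T` the probability that no edge crosses `uv` (i.e. has its endpoints in
different components of `T − uv`) is at least `e^{−λ}`. Since the numbers of edges between
distinct pairs are independent Poisson variables, this probability is the product over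
crossing pairs `(x,y)` of `exp(−2^{1−d_T(x,y)} λ)`. -/
theorem stmt6 {V : Type*} [Fintype V] (G : SimpleGraph V) [DecidableRel G.Adj]
    (hT : G.IsTree) (hdeg : ∀ v : V, G.degree v ≤ 3) (u v : V) (huv : G.Adj u v)
    (lam : ℝ) (hlam : 0 < lam)
    (Lu Lv : Finset V)
    (hLu : ∀ x : V, x ∈ Lu ↔ G.degree x = 1 ∧ (G.deleteEdges {s(u, v)}).Reachable u x)
    (hLv : ∀ y : V, y ∈ Lv ↔ G.degree y = 1 ∧ (G.deleteEdges {s(u, v)}).Reachable v y) :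
    Real.exp (-lam) ≤
      ∏ x ∈ Lu, ∏ y ∈ Lv, Real.exp (-((2 : ℝ) ^ ((1 : ℤ) - (G.dist x y : ℤ)) * lam)) := by
  have hconn := hT.isConnected
  -- distance formula for crossing pairs
  have hdform : ∀ x ∈ Lu, ∀ y ∈ Lv, G.dist x y = G.dist u x + G.dist v y + 1 := by
    intro x hx y hy
    obtain ⟨hx1, hx2⟩ := (hLu x).mp hx
    obtain ⟨hy1, hy2⟩ := (hLv y).mp hy
    have hb := bridge_aux hT.IsAcyclic huv
    have hnxy : ¬ (G.deleteEdges {s(u, v)}).Reachable x y :=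
      fun h => hb (hx2.trans (h.trans hy2.symm))
    obtain ⟨W, hW⟩ := (hconn.preconnected x y).exists_walk_length_eq_dist
    have hmem : s(u, v) ∈ W.edges := edge_mem_walk hnxy W
    have hu : u ∈ W.support := W.fst_mem_support_of_mem_edges hmem
    have h2 := dist_decomp W hW hu
    have h3 : G.dist u y = G.dist v y + 1 := dist_step hT huv hy2
    have h4 : G.dist x y ≤ G.dist x u + G.dist u y := hconn.dist_triangle
    have h5 : G.dist x u = G.dist u x := G.dist_comm
    omega
  -- the two Kraft sums
  have hKu : ∑ x ∈ Lu, (2 : ℝ) ^ (-(G.dist u x : ℤ)) ≤ 1 := by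
    have hLu' : Lu = univ.filter
        (fun x => G.degree x = 1 ∧ (G.deleteEdges {s(u, v)}).Reachable u x) := by
      ext x; rw [Finset.mem_filter]; simp [hLu x]
    rw [hLu']
    exact kraft hT hdeg _ u v huv rfl
  have hKv : ∑ y ∈ Lv, (2 : ℝ) ^ (-(G.dist v y : ℤ)) ≤ 1 := by
    have hLv' : Lv = univ.filter
        (fun y => G.degree y = 1 ∧ (G.deleteEdges {s(v, u)}).Reachable v y) := by
      ext y
      rw [Finset.mem_filter, show s(v, u) = s(u, v) from Sym2.eq_swap]
      simp [hLv y]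
    rw [hLv']
    exact kraft hT hdeg _ v u huv.symm rfl
  -- the double sum is at most 1
  have hnn : ∀ (w z : V), (0 : ℝ) ≤ (2 : ℝ) ^ (-(G.dist w z : ℤ)) :=
    fun w z => zpow_nonneg (by norm_num) _
  have hS : (∑ x ∈ Lu, ∑ y ∈ Lv, (2 : ℝ) ^ ((1 : ℤ) - (G.dist x y : ℤ))) ≤ 1 := by
    have hfac : ∀ x ∈ Lu, ∀ y ∈ Lv,
        (2 : ℝ) ^ ((1 : ℤ) - (G.dist x y : ℤ)) =
          (2 : ℝ) ^ (-(G.dist u x : ℤ)) * (2 : ℝ) ^ (-(G.dist v y : ℤ)) := by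
      intro x hx y hy
      rw [← zpow_add₀ (by norm_num : (2 : ℝ) ≠ 0)]
      congr 1
      have := hdform x hx y hy
      omega
    have heq : (∑ x ∈ Lu, ∑ y ∈ Lv, (2 : ℝ) ^ ((1 : ℤ) - (G.dist x y : ℤ))) =
        (∑ x ∈ Lu, (2 : ℝ) ^ (-(G.dist u x : ℤ))) *
          (∑ y ∈ Lv, (2 : ℝ) ^ (-(G.dist v y : ℤ))) := by
      rw [Finset.sum_mul_sum]
      exact Finset.sum_congr rfl fun x hx =>
        Finset.sum_congr rfl fun y hy => hfac x hx y hy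
    rw [heq]
    have h1 : (0 : ℝ) ≤ ∑ y ∈ Lv, (2 : ℝ) ^ (-(G.dist v y : ℤ)) :=
      Finset.sum_nonneg fun y _ => hnn v y
    calc (∑ x ∈ Lu, (2 : ℝ) ^ (-(G.dist u x : ℤ))) *
          (∑ y ∈ Lv, (2 : ℝ) ^ (-(G.dist v y : ℤ))) ≤ 1 * 1 :=
        mul_le_mul hKu hKv h1 (by norm_num)
      _ = 1 := by norm_num
  -- put it together
  have hle : -lam ≤ ∑ x ∈ Lu, ∑ y ∈ Lv,
      -((2 : ℝ) ^ ((1 : ℤ) - (G.dist x y : ℤ)) * lam) := by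
    have heq : (∑ x ∈ Lu, ∑ y ∈ Lv,
        -((2 : ℝ) ^ ((1 : ℤ) - (G.dist x y : ℤ)) * lam)) =
        -((∑ x ∈ Lu, ∑ y ∈ Lv, (2 : ℝ) ^ ((1 : ℤ) - (G.dist x y : ℤ))) * lam) := by
      rw [Finset.sum_mul]
      rw [← Finset.sum_neg_distrib]
      refine Finset.sum_congr rfl fun x _ => ?_
      rw [Finset.sum_mul, ← Finset.sum_neg_distrib]
    rw [heq]
    have := mul_le_mul_of_nonneg_right hS hlam.le
    rw [one_mul] at this
    linarith
  calc Real.exp (-lam)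
      ≤ Real.exp (∑ x ∈ Lu, ∑ y ∈ Lv,
          -((2 : ℝ) ^ ((1 : ℤ) - (G.dist x y : ℤ)) * lam)) := Real.exp_le_exp.mpr hle
    _ = ∏ x ∈ Lu, ∏ y ∈ Lv,
          Real.exp (-((2 : ℝ) ^ ((1 : ℤ) - (G.dist x y : ℤ)) * lam)) := by
        rw [Real.exp_sum]
        exact Finset.prod_congr rfl fun x _ => Real.exp_sum _ _
end
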